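/- Let V ∈ L^{3/2,1}(ℝ³). Then for every f ∈ L^∞(ℝ³) and η ∈ ℝ³, the function x ↦ ∫_{ℝ³} e^{i|η||x−y|}/(4π|x−y|) V(y) f(y) dy is continuous on ℝ³ and tends to 0 as |x| → ∞. -/

import Mathlib

open MeasureTheory Filter Complex
open scoped ENNReal NNReal Topology

noncomputable section

variable {α : Type*} [MeasurableSpace α]

/-- Nonincreasing rearrangement of `f` with respect to the measure `μ`. -/
def rearr (μ : Measure α) (f : α → ℂ) (t : ℝ) : ℝ≥0∞ :=
  sInf {s : ℝ≥0∞ | μ {x | s < (‖f x‖₊ : ℝ≥0∞)} ≤ ENNReal.ofReal t}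

/-- Lorentz quasinorm `L^{p,q}` with respect to the measure `μ`. -/
def lorentzNorm (μ : Measure α) (p : ℝ) (q : ℝ≥0∞) (f : α → ℂ) : ℝ≥0∞ :=
  if q = ∞ then ⨆ (t : ℝ) (_ : 0 < t), ENNReal.ofReal (t ^ (1 / p)) * rearr μ f t
  else (∫⁻ t in Set.Ioi (0 : ℝ),
      (ENNReal.ofReal (t ^ (1 / p)) * rearr μ f t) ^ q.toReal * (ENNReal.ofReal t)⁻¹) ^
      (1 / q.toReal)

abbrev E3 := EuclideanSpace ℝ (Fin 3)

/-- Kernel of the free resolvent `R₀(|η|² + i0)` on `ℝ³`: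
`e^{i|η||x−y|}/(4π|x−y|)`. -/
def resKer (η : E3) (x y : E3) : ℂ :=
  Complex.exp (Complex.I * (‖η‖ : ℂ) * (‖x - y‖ : ℂ)) / ((4 * Real.pi * ‖x - y‖ : ℝ) : ℂ)

/-!
Write `W*` for the decreasing rearrangement of `W`. Slicing
`1 / |x - y| = ∫₀^∞ 1[l |x - y| < 1] dl` and bounding `∫_B |W| ≤ ∫₀^{|B|} W*` on each ball
`B = B(x, 1/l)` gives, after Tonelli, `sup_x ∫ |W(y)| / |x - y| dy ≤ (4π/3)^{1/3} ‖W‖_{L^{3/2,1}}`.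
Applied to `W = V 1_{B(x,ρ)}` and `W = V 1_{|y| ≥ R}`, whose `L^{3/2,1}` norms tend to `0`
(uniformly in `x`) by dominated convergence on the rearrangement side, this puts `V f` in the
global Kato class: `∫ |V f|(y) / |x - y| dy` is bounded in `x`, uniformly small over `B(x, ρ)` and
uniformly small over `|y| ≥ R`. The resolvent kernel is bounded by `1 / |x - y|`, so continuity at
`x₀` follows by cutting out a small ball around `x₀` and using dominated convergence outside it,
and decay by cutting out the exterior of a large ball, inside which the kernel is `O(1 / |x|)`.
-/

open Set Metric
open scoped Real

theorem lintegral_measure_prodMk_comm {β γ : Type*} [MeasurableSpace β] [MeasurableSpace γ]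
    (μ : Measure β) (ν : Measure γ) [SFinite μ] [SFinite ν] {R : Set (β × γ)}
    (hR : MeasurableSet R) : ∫⁻ b, ν {c | (b, c) ∈ R} ∂μ = ∫⁻ c, μ {b | (b, c) ∈ R} ∂ν :=
  (Measure.prod_apply hR).symm.trans (Measure.prod_apply_symm hR)

theorem min_le_volume_setOf_ofReal_lt_inter_Ioo (m : ℝ) (c : ℝ≥0∞) :
    min (ENNReal.ofReal m) c ≤ volume ({t | ENNReal.ofReal t < c} ∩ Ioo 0 m) := by
  rcases eq_or_ne c ⊤ with rfl | hc
  · simp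
  calc min (ENNReal.ofReal m) c = volume (Ioo 0 (min m c.toReal)) := by
        rw [Real.volume_Ioo, sub_zero, ENNReal.ofReal_min, ENNReal.ofReal_toReal hc]
    _ ≤ _ := by
        refine measure_mono fun t ht => ?_
        exact ⟨(ENNReal.ofReal_lt_iff_lt_toReal ht.1.le hc).2 (ht.2.trans_le (min_le_right _ _)),
          ht.1, ht.2.trans_le (min_le_left _ _)⟩

theorem volume_le_of_forall_ofReal_le {S : Set ℝ} {c : ℝ≥0∞}
    (h : ∀ s ∈ S, 0 < s ∧ ENNReal.ofReal s ≤ c) : volume S ≤ c := by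
  rcases eq_or_ne c ⊤ with rfl | hc
  · exact le_top
  calc volume S ≤ volume (Ioc 0 c.toReal) := measure_mono fun s hs =>
        ⟨(h s hs).1, (ENNReal.ofReal_le_iff_le_toReal hc).1 (h s hs).2⟩
    _ = c := by rw [Real.volume_Ioc, sub_zero, ENNReal.ofReal_toReal hc]

theorem volume_setOf_pos_mul_lt_one {r : ℝ} (hr : 0 ≤ r) :
    volume {l : ℝ | 0 < l ∧ l * r < 1} = (ENNReal.ofReal r)⁻¹ := by
  rcases hr.eq_or_lt with rfl | hr
  · simp only [mul_zero, zero_lt_one, and_true, ENNReal.ofReal_zero, ENNReal.inv_zero]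
    exact Real.volume_Ioi
  have : {l : ℝ | 0 < l ∧ l * r < 1} = Ioo 0 r⁻¹ := by
    ext l
    simp [← lt_div_iff₀ hr, one_div]
  rw [this, Real.volume_Ioo, sub_zero, ENNReal.ofReal_inv_of_pos hr]

theorem lintegral_inv_edist_eq {β : Type*} [MetricSpace β] [MeasurableSpace β]
    [OpensMeasurableSpace β] (ν : Measure β) [SFinite ν] (x : β) :
    ∫⁻ y, (edist y x)⁻¹ ∂ν = ∫⁻ l in Ioi (0 : ℝ), ν (ball x l⁻¹) := by
  have hR : MeasurableSet {p : β × ℝ | 0 < p.2 ∧ p.2 * dist p.1 x < 1} :=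
    (measurableSet_lt measurable_const measurable_snd).inter <| measurableSet_lt
      (measurable_snd.mul ((continuous_id.dist continuous_const).measurable.comp measurable_fst))
      measurable_const
  calc ∫⁻ y, (edist y x)⁻¹ ∂ν = ∫⁻ y, volume {l : ℝ | 0 < l ∧ l * dist y x < 1} ∂ν := by
        simp_rw [volume_setOf_pos_mul_lt_one dist_nonneg, edist_dist]
    _ = ∫⁻ l, ν {y | 0 < l ∧ l * dist y x < 1} := lintegral_measure_prodMk_comm ν volume hR
    _ = ∫⁻ l in Ioi (0 : ℝ), ν (ball x l⁻¹) := by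
        rw [← lintegral_indicator measurableSet_Ioi]
        refine lintegral_congr fun l => ?_
        by_cases hl : 0 < l
        · simp [hl, ball, ← lt_div_iff₀' hl, one_div]
        · simp [hl]

theorem volume_setOf_lt_mul_inv_pow_inter_Ioi {n : ℕ} (hn : n ≠ 0) {κ t : ℝ} (hκ : 0 ≤ κ)
    (ht : 0 < t) :
    volume ({l : ℝ | t < κ * l⁻¹ ^ n} ∩ Ioi 0) = ENNReal.ofReal ((κ / t) ^ (n⁻¹ : ℝ)) := by
  have : {l : ℝ | t < κ * l⁻¹ ^ n} ∩ Ioi 0 = Ioo 0 ((κ / t) ^ (n⁻¹ : ℝ)) := by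
    ext l
    simp only [mem_inter_iff, mem_ofPred_eq, mem_Ioi, mem_Ioo, and_comm (a := 0 < l)]
    refine and_congr_left fun hl => ?_
    rw [Real.lt_rpow_inv_iff_of_pos hl.le (div_nonneg hκ ht.le) (by positivity),
      Real.rpow_natCast, lt_div_iff₀' ht, inv_pow, ← div_eq_mul_inv, lt_div_iff₀ (by positivity)]
  rw [this, Real.volume_Ioo, sub_zero]

theorem lintegral_setLIntegral_Ioo_mul_inv_pow {n : ℕ} (hn : n ≠ 0) {κ : ℝ} (hκ : 0 ≤ κ)
    {g : ℝ → ℝ≥0∞} (hg : Measurable g) :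
    ∫⁻ l in Ioi 0, ∫⁻ t in Ioo 0 (κ * l⁻¹ ^ n), g t =
      ∫⁻ t in Ioi 0, g t * ENNReal.ofReal ((κ / t) ^ (n⁻¹ : ℝ)) := by
  have hF : Measurable fun p : ℝ × ℝ => (Iio (κ * p.1⁻¹ ^ n)).indicator g p.2 :=
    (hg.comp measurable_snd).indicator (measurableSet_lt measurable_snd (by fun_prop))
  calc ∫⁻ l in Ioi 0, ∫⁻ t in Ioo 0 (κ * l⁻¹ ^ n), g t
      = ∫⁻ l in Ioi 0, ∫⁻ t in Ioi 0, (Iio (κ * l⁻¹ ^ n)).indicator g t := by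
        simp_rw [lintegral_indicator measurableSet_Iio, Measure.restrict_restrict measurableSet_Iio,
          Iio_inter_Ioi]
    _ = ∫⁻ t in Ioi 0, ∫⁻ l in Ioi 0, (Iio (κ * l⁻¹ ^ n)).indicator g t :=
        lintegral_lintegral_swap hF.aemeasurable
    _ = ∫⁻ t in Ioi 0, g t * ENNReal.ofReal ((κ / t) ^ (n⁻¹ : ℝ)) := by
        refine setLIntegral_congr_fun measurableSet_Ioi fun t (ht : 0 < t) => ?_
        have hS : MeasurableSet {l : ℝ | t < κ * l⁻¹ ^ n} :=
          measurableSet_lt measurable_const (by fun_prop)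
        rw [← volume_setOf_lt_mul_inv_pow_inter_Ioi hn hκ ht, ← Measure.restrict_apply hS,
          ← lintegral_indicator_const hS]
        rfl

theorem lintegral_Ioi_ofReal_rpow (s : ℝ) : ∫⁻ t in Ioi (0 : ℝ), ENNReal.ofReal (t ^ s) = ⊤ := by
  by_contra h
  refine not_integrableOn_Ioi_rpow s ⟨(measurable_id.pow_const s).aestronglyMeasurable, ?_⟩
  rw [hasFiniteIntegral_iff_ofReal ((ae_restrict_iff' measurableSet_Ioi).2
    (ae_of_all _ fun t ht => Real.rpow_nonneg (le_of_lt ht) s))]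
  exact lt_top_iff_ne_top.2 h

section Rearrangement

variable {μ : Measure α} {f g : α → ℂ} {s : ℝ≥0∞} {t : ℝ}

theorem rearr_antitone (μ : Measure α) (f : α → ℂ) : Antitone (rearr μ f) :=
  fun _ _ h => sInf_le_sInf fun _ hs => hs.trans (ENNReal.ofReal_le_ofReal h)

theorem measurable_rearr (μ : Measure α) (f : α → ℂ) : Measurable (rearr μ f) :=
  (rearr_antitone μ f).measurable

theorem rearr_le_of_measure_le (h : μ {x | s < ‖f x‖ₑ} ≤ ENNReal.ofReal t) : rearr μ f t ≤ s :=
  sInf_le h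

theorem le_rearr_of_lt_measure (h : ENNReal.ofReal t < μ {x | s < ‖f x‖ₑ}) : s ≤ rearr μ f t :=
  le_sInf fun _ hσ => not_lt.1 fun hlt =>
    (h.trans_le (measure_mono fun _ hx => hlt.trans hx)).not_ge hσ

theorem rearr_mono (h : ∀ x, ‖g x‖ₑ ≤ ‖f x‖ₑ) (t : ℝ) : rearr μ g t ≤ rearr μ f t :=
  sInf_le_sInf fun _ hs => (measure_mono fun x hx => hx.trans_le (h x)).trans hs

theorem rearr_indicator_le (A : Set α) (t : ℝ) : rearr μ (A.indicator f) t ≤ rearr μ f t :=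
  rearr_mono (fun x => by
    simpa only [enorm_indicator_eq_indicator_enorm] using indicator_le_self _ _ x) t

theorem rearr_indicator_eq_zero {A : Set α} (hA : μ A ≤ ENNReal.ofReal t) :
    rearr μ (A.indicator f) t = 0 :=
  nonpos_iff_eq_zero.1 <| rearr_le_of_measure_le <| (measure_mono fun x hx =>
    by_contra fun hxA => by simp [hxA] at hx).trans hA

theorem setLIntegral_enorm_le_lintegral_rearr [SFinite μ] (hf : Measurable f) (A : Set α)
    {m : ℝ} (hAm : μ A ≤ ENNReal.ofReal m) :
    ∫⁻ x in A, ‖f x‖ₑ ∂μ ≤ ∫⁻ t in Ioo 0 m, rearr μ f t := by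
  set D : ℝ → ℝ≥0∞ := fun s => μ {x | s < ‖f x‖}
  have hD : Measurable D := Antitone.measurable fun s s' h => measure_mono fun x hx => h.trans_lt hx
  have hR : MeasurableSet {p : ℝ × ℝ | ENNReal.ofReal p.2 < D p.1} :=
    measurableSet_lt (ENNReal.measurable_ofReal.comp measurable_snd) (hD.comp measurable_fst)
  calc ∫⁻ x in A, ‖f x‖ₑ ∂μ = ∫⁻ s in Ioi 0, μ.restrict A {x | s < ‖f x‖} := by
        simp_rw [← ofReal_norm]
        exact lintegral_eq_lintegral_meas_lt _ (ae_of_all _ fun _ => norm_nonneg _)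
          hf.norm.aemeasurable
    _ ≤ ∫⁻ s in Ioi 0, volume.restrict (Ioo 0 m) {t | ENNReal.ofReal t < D s} := by
        refine lintegral_mono fun s => ?_
        rw [Measure.restrict_apply' measurableSet_Ioo]
        refine le_trans (le_min ?_ ?_) (min_le_volume_setOf_ofReal_lt_inter_Ioo m (D s))
        · exact ((measure_mono (subset_univ _)).trans_eq (Measure.restrict_apply_univ A)).trans hAm
        · exact Measure.restrict_apply_le _ _
    _ = ∫⁻ t in Ioo 0 m, volume.restrict (Ioi 0) {s | ENNReal.ofReal t < D s} :=
        lintegral_measure_prodMk_comm _ _ hR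
    _ ≤ ∫⁻ t in Ioo 0 m, rearr μ f t := by
        refine lintegral_mono fun t => ?_
        rw [Measure.restrict_apply' measurableSet_Ioi]
        refine volume_le_of_forall_ofReal_le fun s ⟨hts, hs⟩ => ⟨hs, le_rearr_of_lt_measure ?_⟩
        simp only [← ofReal_norm, ENNReal.ofReal_lt_ofReal_iff_of_nonneg hs.le]
        exact hts

end Rearrangement

section Lorentz

variable {μ : Measure α} {p : ℝ} {f : α → ℂ}

theorem lorentzNorm_one_eq (μ : Measure α) (p : ℝ) (f : α → ℂ) :
    lorentzNorm μ p 1 f = ∫⁻ t in Ioi 0, rearr μ f t * ENNReal.ofReal (t ^ (1 / p - 1)) := by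
  simp only [lorentzNorm, ENNReal.one_ne_top, if_false, ENNReal.toReal_one, ENNReal.rpow_one,
    div_one]
  refine setLIntegral_congr_fun measurableSet_Ioi fun t (ht : 0 < t) => ?_
  rw [Real.rpow_sub_one ht.ne', ENNReal.ofReal_div_of_pos ht]
  simp only [div_eq_mul_inv]
  ring

theorem measure_lt_enorm_ne_top_of_lorentzNorm_ne_top (hf : lorentzNorm μ p 1 f ≠ ⊤) {s : ℝ≥0∞}
    (hs : s ≠ 0) : μ {x | s < ‖f x‖ₑ} ≠ ⊤ := by
  intro htop
  have hle : ∀ t, s ≤ rearr μ f t := fun t =>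
    le_rearr_of_lt_measure (htop ▸ ENNReal.ofReal_lt_top)
  refine hf (eq_top_iff.2 ?_)
  calc ⊤ = s * ∫⁻ t in Ioi 0, ENNReal.ofReal (t ^ (1 / p - 1)) := by
        rw [lintegral_Ioi_ofReal_rpow, ENNReal.mul_top hs]
    _ ≤ lorentzNorm μ p 1 f := by
        rw [lorentzNorm_one_eq]
        exact (lintegral_const_mul_le _ _).trans (lintegral_mono fun t => mul_le_mul_left (hle t) _)

theorem exists_pos_lorentzNorm_indicator_le (hf : lorentzNorm μ p 1 f ≠ ⊤) {ε : ℝ≥0∞}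
    (hε : 0 < ε) : ∃ δ > 0, ∀ A : Set α, μ A ≤ δ → lorentzNorm μ p 1 (A.indicator f) ≤ ε := by
  set F : ℝ → ℝ≥0∞ := fun t => rearr μ f t * ENNReal.ofReal (t ^ (1 / p - 1))
  have hbound : ∀ m (A : Set α), μ A ≤ ENNReal.ofReal m →
      lorentzNorm μ p 1 (A.indicator f) ≤ ∫⁻ t in Iio m, F t ∂volume.restrict (Ioi 0) := by
    intro m A hA
    rw [lorentzNorm_one_eq, ← lintegral_indicator measurableSet_Iio]
    refine lintegral_mono fun t => ?_
    by_cases ht : t ∈ Iio m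
    · rw [indicator_of_mem ht]
      exact mul_le_mul_left (rearr_indicator_le A t) _
    · rw [indicator_of_notMem ht,
        rearr_indicator_eq_zero (hA.trans (ENNReal.ofReal_le_ofReal (not_lt.1 ht))), zero_mul]
  have hvol : ∀ m, volume.restrict (Ioi 0) (Iio m) = ENNReal.ofReal m := fun m => by
    rw [Measure.restrict_apply measurableSet_Iio, Iio_inter_Ioi, Real.volume_Ioo, sub_zero]
  have hlim : Tendsto (fun m => ∫⁻ t in Iio m, F t ∂volume.restrict (Ioi 0)) (𝓝[>] 0) (𝓝 0) := by
    refine tendsto_setLIntegral_zero (by rwa [lorentzNorm_one_eq] at hf) ?_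
    simpa [Function.comp_def, hvol] using
      (ENNReal.continuous_ofReal.tendsto 0).mono_left nhdsWithin_le_nhds
  obtain ⟨m, hm, hm0⟩ := ((hlim.eventually (Iic_mem_nhds hε)).and self_mem_nhdsWithin).exists
  exact ⟨ENNReal.ofReal m, ENNReal.ofReal_pos.2 hm0, fun A hA => (hbound m A hA).trans hm⟩

theorem tendsto_rearr_indicator_atTop (hfm : Measurable f)
    (hD : ∀ s ≠ 0, μ {x | s < ‖f x‖ₑ} ≠ ⊤) {A : ℕ → Set α} (hAm : ∀ n, MeasurableSet (A n))
    (hA : Antitone A) (hA0 : ⋂ n, A n = ∅) {t : ℝ} (ht : 0 < t) :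
    Tendsto (fun n => rearr μ ((A n).indicator f) t) atTop (𝓝 0) := by
  refine ENNReal.tendsto_nhds_zero.2 fun δ hδ => ?_
  set B : ℕ → Set α := fun n => A n ∩ {x | δ < ‖f x‖ₑ}
  have hB : Tendsto (μ ∘ B) atTop (𝓝 0) := by
    have := tendsto_measure_iInter_atTop
      (fun n => ((hAm n).inter (measurableSet_lt measurable_const hfm.enorm)).nullMeasurableSet)
      (fun n m h => inter_subset_inter_left _ (hA h))
      ⟨0, ne_top_of_le_ne_top (hD δ hδ.ne') (measure_mono inter_subset_right)⟩
    rwa [← iInter_inter, hA0, empty_inter, measure_empty] at this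
  filter_upwards [hB.eventually (gt_mem_nhds (ENNReal.ofReal_pos.2 ht))] with n hn
  refine rearr_le_of_measure_le ((measure_mono fun x hx => ?_).trans hn.le)
  by_cases hxA : x ∈ A n <;> simp_all [B]

theorem tendsto_lorentzNorm_indicator_atTop (hfm : Measurable f) (hf : lorentzNorm μ p 1 f ≠ ⊤)
    {A : ℕ → Set α} (hAm : ∀ n, MeasurableSet (A n)) (hA : Antitone A) (hA0 : ⋂ n, A n = ∅) :
    Tendsto (fun n => lorentzNorm μ p 1 ((A n).indicator f)) atTop (𝓝 0) := by
  have hD := fun s (hs : s ≠ 0) => measure_lt_enorm_ne_top_of_lorentzNorm_ne_top hf hs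
  simp only [lorentzNorm_one_eq] at hf ⊢
  simpa using tendsto_lintegral_filter_of_dominated_convergence (μ := volume.restrict (Ioi 0))
    (f := 0) _ (.of_forall fun n => (measurable_rearr _ _).mul
      (ENNReal.measurable_ofReal.comp (measurable_id.pow_const _)))
    (.of_forall fun n => ae_of_all _ fun t => mul_le_mul_left (rearr_indicator_le _ _) _) hf
    ((ae_restrict_iff' measurableSet_Ioi).2 (ae_of_all _ fun t ht => by
      simpa using ENNReal.Tendsto.mul_const (tendsto_rearr_indicator_atTop hfm hD hAm hA hA0 ht)
        (Or.inr ENNReal.ofReal_ne_top)))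

/-- `(4π/3 / t)^{1/3}` is the decreasing rearrangement of `y ↦ 1/|y|` on `ℝ³`. -/
theorem lorentzNorm_three_halves_one_eq (μ : Measure α) (f : α → ℂ) :
    ENNReal.ofReal ((π * 4 / 3) ^ (3⁻¹ : ℝ)) * lorentzNorm μ (3 / 2) 1 f =
      ∫⁻ t in Ioi 0, rearr μ f t * ENNReal.ofReal ((π * 4 / 3 / t) ^ (3⁻¹ : ℝ)) := by
  rw [lorentzNorm_one_eq, ← lintegral_const_mul' _ _ ENNReal.ofReal_ne_top]
  refine setLIntegral_congr_fun measurableSet_Ioi fun t (ht : 0 < t) => ?_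
  rw [Real.div_rpow (by positivity) ht.le, div_eq_mul_inv _ (t ^ (3⁻¹ : ℝ)),
    ← Real.rpow_neg ht.le, ENNReal.ofReal_mul (by positivity)]
  norm_num
  ring

end Lorentz

theorem lintegral_enorm_div_le_lorentzNorm {W : E3 → ℂ} (hW : Measurable W) (x : E3) :
    ∫⁻ y, ‖W y‖ₑ / ‖x - y‖ₑ ≤
      ENNReal.ofReal ((π * 4 / 3) ^ (3⁻¹ : ℝ)) * lorentzNorm volume (3 / 2) 1 W := by
  set ν := volume.withDensity fun y => ‖W y‖ₑ
  calc ∫⁻ y, ‖W y‖ₑ / ‖x - y‖ₑ = ∫⁻ y, (edist y x)⁻¹ ∂ν := by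
        rw [lintegral_withDensity_eq_lintegral_mul _ hW.enorm (by fun_prop)]
        simp [div_eq_mul_inv, edist_eq_enorm_sub, enorm_sub_rev]
    _ = ∫⁻ l in Ioi 0, ν (ball x l⁻¹) := lintegral_inv_edist_eq ν x
    _ ≤ ∫⁻ l in Ioi 0, ∫⁻ t in Ioo 0 (π * 4 / 3 * l⁻¹ ^ 3), rearr volume W t := by
        refine setLIntegral_mono' measurableSet_Ioi fun l (hl : 0 < l) => ?_
        rw [withDensity_apply _ measurableSet_ball]
        refine setLIntegral_enorm_le_lintegral_rearr hW _ (le_of_eq ?_)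
        rw [EuclideanSpace.volume_ball_fin_three, ← ENNReal.ofReal_pow (by positivity),
          ← ENNReal.ofReal_mul (by positivity), mul_comm]
    _ = ∫⁻ t in Ioi 0, rearr volume W t * ENNReal.ofReal ((π * 4 / 3 / t) ^ (3⁻¹ : ℝ)) := by
        exact_mod_cast lintegral_setLIntegral_Ioo_mul_inv_pow three_ne_zero (by positivity)
          (measurable_rearr volume W)
    _ = _ := (lorentzNorm_three_halves_one_eq volume W).symm

section GlobalKato

variable {E : Type*} [NormedAddCommGroup E] {k : E → E → ℂ}

theorem enorm_mul_le_enorm_div (hk : ∀ x y, x ≠ y → ‖k x y‖ ≤ ‖x - y‖⁻¹) (x y : E) (a : ℂ) :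
    ‖k x y * a‖ₑ ≤ ‖a‖ₑ / ‖x - y‖ₑ := by
  rcases eq_or_ne x y with rfl | hxy
  · rcases eq_or_ne a 0 with rfl | ha
    · simp
    · simp [ENNReal.div_zero (enorm_ne_zero.2 ha)]
  rw [enorm_mul, mul_comm, div_eq_mul_inv]
  refine mul_le_mul_right ?_ _
  rw [← ofReal_norm, ← ofReal_norm,
    ← ENNReal.ofReal_inv_of_pos (norm_pos_iff.2 (sub_ne_zero.2 hxy))]
  exact ENNReal.ofReal_le_ofReal (hk x y hxy)

theorem enorm_sub_le_two_mul_enorm_sub {x₀ x y : E} {r : ℝ} (hy : y ∉ ball x₀ r)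
    (hx : x ∈ ball x₀ (r / 2)) : ‖x₀ - y‖ₑ ≤ 2 * ‖x - y‖ₑ := by
  rw [mem_ball, not_lt, dist_eq_norm'] at hy
  rw [mem_ball, dist_eq_norm'] at hx
  rw [← ofReal_norm, ← ofReal_norm, ← ENNReal.ofReal_ofNat 2, ← ENNReal.ofReal_mul zero_le_two]
  exact ENNReal.ofReal_le_ofReal (by linarith [norm_sub_le_norm_sub_add_norm_sub x₀ x y])

theorem inv_enorm_sub_le_of_norm_lt {x y : E} {R : ℝ} (hR : 0 < R) (hy : ‖y‖ < R)
    (hx : 2 * R ≤ ‖x‖) : ‖x - y‖ₑ⁻¹ ≤ ENNReal.ofReal (2 * R / ‖x‖) * ‖y‖ₑ⁻¹ := by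
  have hx0 : 0 < ‖x‖ := by linarith
  rcases eq_or_ne y 0 with rfl | hy0
  · simp [ENNReal.mul_top, (by positivity : 0 < 2 * R / ‖x‖)]
  have hxy : ‖x‖ / 2 ≤ ‖x - y‖ := by linarith [norm_sub_norm_le x y]
  rw [← ofReal_norm, ← ofReal_norm, ← ENNReal.ofReal_inv_of_pos (by linarith),
    ← ENNReal.ofReal_inv_of_pos (norm_pos_iff.2 hy0), ← ENNReal.ofReal_mul (by positivity)]
  refine ENNReal.ofReal_le_ofReal ?_
  calc ‖x - y‖⁻¹ ≤ (‖x‖ / 2)⁻¹ := inv_anti₀ (by positivity) hxy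
    _ = 2 / ‖x‖ * 1 := by rw [inv_div, mul_one]
    _ ≤ 2 / ‖x‖ * (R / ‖y‖) := by
        gcongr
        exact (one_le_div (norm_pos_iff.2 hy0)).2 hy.le
    _ = 2 * R / ‖x‖ * ‖y‖⁻¹ := by ring

variable [MeasurableSpace E] {μ : Measure E} {g : E → ℂ}

/-- On the diagonal the integrand `‖g y‖ₑ / 0` is `⊤` unless `g y = 0`. -/
structure GlobalKato (μ : Measure E) (g : E → ℂ) : Prop where
  iSup_lintegral_lt_top : ⨆ x, ∫⁻ y, ‖g y‖ₑ / ‖x - y‖ₑ ∂μ < ⊤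
  small_near : ∀ ε > 0, ∃ ρ > 0, ∀ x, ∫⁻ y in ball x ρ, ‖g y‖ₑ / ‖x - y‖ₑ ∂μ ≤ ε
  small_far : ∀ ε > 0, ∃ R > 0, ∀ x, ∫⁻ y in (ball 0 R)ᶜ, ‖g y‖ₑ / ‖x - y‖ₑ ∂μ ≤ ε

theorem GlobalKato.lintegral_lt_top (hg : GlobalKato μ g) (x : E) :
    ∫⁻ y, ‖g y‖ₑ / ‖x - y‖ₑ ∂μ < ⊤ :=
  (le_iSup (fun x => ∫⁻ y, ‖g y‖ₑ / ‖x - y‖ₑ ∂μ) x).trans_lt hg.iSup_lintegral_lt_top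

theorem GlobalKato.mul {f : E → ℂ} {M : ℝ≥0∞} (hg : GlobalKato μ g) (hM : M ≠ ⊤)
    (hf : ∀ᵐ y ∂μ, ‖f y‖ₑ ≤ M) : GlobalKato μ fun y => g y * f y := by
  have hle : ∀ s x, ∫⁻ y in s, ‖g y * f y‖ₑ / ‖x - y‖ₑ ∂μ ≤
      M * ∫⁻ y in s, ‖g y‖ₑ / ‖x - y‖ₑ ∂μ := fun s x => by
      rw [← lintegral_const_mul' _ _ hM]
      refine lintegral_mono_ae (ae_restrict_of_ae (hf.mono fun y hy => ?_))
      rw [enorm_mul, mul_comm, mul_div_assoc]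
      exact mul_le_mul_left hy _
  have hsmall : ∀ {ε : ℝ≥0∞}, 0 < ε → 0 < ε / M := fun hε => ENNReal.div_pos hε.ne' hM
  refine ⟨?_, fun ε hε => ?_, fun ε hε => ?_⟩
  · refine (iSup_le fun x => ?_).trans_lt (ENNReal.mul_lt_top hM.lt_top hg.iSup_lintegral_lt_top)
    have h := hle univ x
    simp only [Measure.restrict_univ] at h
    exact h.trans (mul_le_mul_right (le_iSup (fun x => ∫⁻ y, ‖g y‖ₑ / ‖x - y‖ₑ ∂μ) x) _)
  · obtain ⟨ρ, hρ, h⟩ := hg.small_near _ (hsmall hε)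
    exact ⟨ρ, hρ, fun x => (hle _ x).trans ((mul_le_mul_right (h x) _).trans ENNReal.mul_div_le)⟩
  · obtain ⟨R, hR, h⟩ := hg.small_far _ (hsmall hε)
    exact ⟨R, hR, fun x => (hle _ x).trans ((mul_le_mul_right (h x) _).trans ENNReal.mul_div_le)⟩

theorem enorm_setIntegral_mul_le (hk : ∀ x y, x ≠ y → ‖k x y‖ ≤ ‖x - y‖⁻¹) (s : Set E) (x : E) :
    ‖∫ y in s, k x y * g y ∂μ‖ₑ ≤ ∫⁻ y in s, ‖g y‖ₑ / ‖x - y‖ₑ ∂μ :=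
  (enorm_integral_le_lintegral_enorm _).trans
    (lintegral_mono fun y => enorm_mul_le_enorm_div hk x y _)

theorem integrable_mul_of_lintegral_lt_top (hk : ∀ x y, x ≠ y → ‖k x y‖ ≤ ‖x - y‖⁻¹) {x : E}
    (hkm : AEStronglyMeasurable (k x) μ) (hgm : AEStronglyMeasurable g μ)
    (hg : ∫⁻ y, ‖g y‖ₑ / ‖x - y‖ₑ ∂μ < ⊤) : Integrable (fun y => k x y * g y) μ :=
  ⟨hkm.mul hgm, (lintegral_mono fun y => enorm_mul_le_enorm_div hk x y _).trans_lt hg⟩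

variable [OpensMeasurableSpace E]

theorem tendsto_setIntegral_compl_ball_mul (hk : ∀ x y, x ≠ y → ‖k x y‖ ≤ ‖x - y‖⁻¹)
    (hkm : ∀ x, AEStronglyMeasurable (k x) μ) (hkc : ∀ y, ContinuousOn (fun x => k x y) {y}ᶜ)
    (hgm : AEStronglyMeasurable g μ) {x₀ : E} (hg : ∫⁻ y, ‖g y‖ₑ / ‖x₀ - y‖ₑ ∂μ ≠ ⊤) {r : ℝ}
    (hr : 0 < r) :
    Tendsto (fun x => ∫ y in (ball x₀ r)ᶜ, k x y * g y ∂μ) (𝓝 x₀)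
      (𝓝 (∫ y in (ball x₀ r)ᶜ, k x₀ y * g y ∂μ)) := by
  set q : E → ℝ≥0∞ := fun y => 2 * (‖g y‖ₑ / ‖x₀ - y‖ₑ)
  have hq : ∀ y ∉ ball x₀ r, q y ≠ ⊤ := fun y hy => ENNReal.mul_ne_top ENNReal.ofNat_ne_top <|
    ENNReal.div_ne_top enorm_ne_top <| enorm_ne_zero.2 <| sub_ne_zero.2 fun h =>
      hy (h ▸ mem_ball_self hr)
  refine tendsto_integral_filter_of_dominated_convergence (fun y => (q y).toReal)
    (.of_forall fun x => ((hkm x).mul hgm).restrict) ?_ ?_ ?_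
  · filter_upwards [ball_mem_nhds x₀ (half_pos hr)] with x hx
    filter_upwards [ae_restrict_mem measurableSet_ball.compl] with y hy
    refine (ENNReal.ofReal_le_iff_le_toReal (hq y hy)).1 ?_
    rw [ofReal_norm]
    calc ‖k x y * g y‖ₑ ≤ ‖g y‖ₑ / ‖x - y‖ₑ := enorm_mul_le_enorm_div hk x y _
      _ = 2 * ‖g y‖ₑ / (2 * ‖x - y‖ₑ) :=
        (ENNReal.mul_div_mul_left _ _ two_ne_zero ENNReal.ofNat_ne_top).symm
      _ ≤ 2 * ‖g y‖ₑ / ‖x₀ - y‖ₑ :=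
        ENNReal.div_le_div_left (enorm_sub_le_two_mul_enorm_sub hy hx) _
      _ = q y := mul_div_assoc _ _ _
  · have hqm : AEMeasurable q μ := (hgm.enorm.div
      (continuous_const.sub continuous_id).enorm.measurable.aemeasurable).const_mul 2
    refine integrable_toReal_of_lintegral_ne_top hqm.restrict ?_
    rw [lintegral_const_mul' _ _ ENNReal.ofNat_ne_top]
    exact ENNReal.mul_ne_top ENNReal.ofNat_ne_top
      (ne_top_of_le_ne_top hg (setLIntegral_le_lintegral _ _))
  · filter_upwards [ae_restrict_mem measurableSet_ball.compl] with y hy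
    have hy₀ : x₀ ∈ ({y}ᶜ : Set E) := fun h => hy (h ▸ mem_ball_self hr)
    exact ((hkc y).continuousAt (isOpen_compl_singleton.mem_nhds hy₀)).tendsto.mul_const _

theorem GlobalKato.continuous_integral_mul (hg : GlobalKato μ g) (hgm : AEStronglyMeasurable g μ)
    (hk : ∀ x y, x ≠ y → ‖k x y‖ ≤ ‖x - y‖⁻¹) (hkm : ∀ x, AEStronglyMeasurable (k x) μ)
    (hkc : ∀ y, ContinuousOn (fun x => k x y) {y}ᶜ) :
    Continuous fun x => ∫ y, k x y * g y ∂μ := by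
  refine continuous_iff_continuousAt.2 fun x₀ =>
    tendsto_iff_edist_tendsto_0.2 <| ENNReal.tendsto_nhds_zero.2 fun ε hε => ?_
  obtain ⟨ρ, hρ, hnear⟩ := hg.small_near (ε / 2 / 2)
    (ENNReal.half_pos (ENNReal.half_pos hε.ne').ne')
  set S := ball x₀ (ρ / 2)
  have hfar := tendsto_iff_edist_tendsto_0.1 <|
    tendsto_setIntegral_compl_ball_mul hk hkm hkc hgm (hg.lintegral_lt_top x₀).ne (half_pos hρ)
  have hS : ∀ x ∈ S, ‖∫ y in S, k x y * g y ∂μ‖ₑ ≤ ε / 2 / 2 := fun x hx =>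
    (enorm_setIntegral_mul_le hk S x).trans <| (lintegral_mono_set <| ball_subset_ball' <| by
      rw [dist_comm]; linarith [mem_ball.1 hx]).trans (hnear x)
  have hint := fun x => integrable_mul_of_lintegral_lt_top hk (hkm x) hgm (hg.lintegral_lt_top x)
  filter_upwards [ENNReal.tendsto_nhds_zero.1 hfar _ (ENNReal.half_pos hε.ne'),
    ball_mem_nhds x₀ (half_pos hρ)] with x hx hxS
  rw [← integral_add_compl measurableSet_ball (hint x),
    ← integral_add_compl measurableSet_ball (hint x₀), edist_eq_enorm_sub]
  calc ‖(∫ y in S, k x y * g y ∂μ) + (∫ y in Sᶜ, k x y * g y ∂μ) -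
        ((∫ y in S, k x₀ y * g y ∂μ) + ∫ y in Sᶜ, k x₀ y * g y ∂μ)‖ₑ
      ≤ ‖(∫ y in Sᶜ, k x y * g y ∂μ) - ∫ y in Sᶜ, k x₀ y * g y ∂μ‖ₑ +
        (‖∫ y in S, k x y * g y ∂μ‖ₑ + ‖∫ y in S, k x₀ y * g y ∂μ‖ₑ) := by
        rw [add_sub_add_comm, add_comm]
        exact (enorm_add_le _ _).trans (add_le_add_right enorm_sub_le _)
    _ ≤ ε / 2 + (ε / 2 / 2 + ε / 2 / 2) := by
        rw [← edist_eq_enorm_sub]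
        exact add_le_add hx (add_le_add (hS x hxS) (hS x₀ (mem_ball_self (half_pos hρ))))
    _ = ε := by rw [ENNReal.add_halves, ENNReal.add_halves]

theorem tendsto_setLIntegral_ball_div_cobounded (hg : ∫⁻ y, ‖g y‖ₑ / ‖y‖ₑ ∂μ ≠ ⊤) {R : ℝ}
    (hR : 0 < R) :
    Tendsto (fun x => ∫⁻ y in ball 0 R, ‖g y‖ₑ / ‖x - y‖ₑ ∂μ) (Bornology.cobounded E) (𝓝 0) := by
  have hlim : Tendsto (fun x : E => ENNReal.ofReal (2 * R / ‖x‖) * ∫⁻ y, ‖g y‖ₑ / ‖y‖ₑ ∂μ)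
      (Bornology.cobounded E) (𝓝 0) := by
    simpa using ENNReal.Tendsto.mul_const (ENNReal.tendsto_ofReal
      (tendsto_const_nhds.div_atTop tendsto_norm_cobounded_atTop)) (Or.inr hg)
  refine tendsto_of_tendsto_of_tendsto_of_le_of_le' tendsto_const_nhds hlim
    (.of_forall fun _ => zero_le) ?_
  filter_upwards [tendsto_norm_cobounded_atTop.eventually_ge_atTop (2 * R)] with x hx
  calc ∫⁻ y in ball 0 R, ‖g y‖ₑ / ‖x - y‖ₑ ∂μ
      ≤ ∫⁻ y in ball 0 R, ENNReal.ofReal (2 * R / ‖x‖) * (‖g y‖ₑ / ‖y‖ₑ) ∂μ := by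
        refine setLIntegral_mono' measurableSet_ball fun y hy => ?_
        rw [div_eq_mul_inv ‖g y‖ₑ, div_eq_mul_inv ‖g y‖ₑ, mul_left_comm]
        exact mul_le_mul_right (inv_enorm_sub_le_of_norm_lt hR (mem_ball_zero_iff.1 hy) hx) _
    _ ≤ ENNReal.ofReal (2 * R / ‖x‖) * ∫⁻ y, ‖g y‖ₑ / ‖y‖ₑ ∂μ :=
        (lintegral_const_mul' _ _ ENNReal.ofReal_ne_top).trans_le
          (mul_le_mul_right (setLIntegral_le_lintegral _ _) _)

theorem GlobalKato.tendsto_integral_mul_cobounded (hg : GlobalKato μ g)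
    (hgm : AEStronglyMeasurable g μ) (hk : ∀ x y, x ≠ y → ‖k x y‖ ≤ ‖x - y‖⁻¹)
    (hkm : ∀ x, AEStronglyMeasurable (k x) μ) :
    Tendsto (fun x => ∫ y, k x y * g y ∂μ) (Bornology.cobounded E) (𝓝 0) := by
  refine tendsto_iff_edist_tendsto_0.2 <| ENNReal.tendsto_nhds_zero.2 fun ε hε => ?_
  obtain ⟨R, hR, hfar⟩ := hg.small_far (ε / 2) (ENNReal.half_pos hε.ne')
  have hnear := tendsto_setLIntegral_ball_div_cobounded
    (by simpa using (hg.lintegral_lt_top 0).ne) hR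
  filter_upwards [ENNReal.tendsto_nhds_zero.1 hnear _ (ENNReal.half_pos hε.ne')] with x hx
  rw [edist_zero_right, ← integral_add_compl measurableSet_ball
    (integrable_mul_of_lintegral_lt_top hk (hkm x) hgm (hg.lintegral_lt_top x))]
  calc _ ≤ _ := enorm_add_le _ _
    _ ≤ ε / 2 + ε / 2 := add_le_add ((enorm_setIntegral_mul_le hk _ x).trans hx)
        ((enorm_setIntegral_mul_le hk _ x).trans (hfar x))
    _ = ε := ENNReal.add_halves ε

end GlobalKato

theorem globalKato_of_lorentzNorm_ne_top {V : E3 → ℂ} (hVm : Measurable V)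
    (hV : lorentzNorm volume (3 / 2) 1 V ≠ ⊤) : GlobalKato volume V := by
  set C := ENNReal.ofReal ((π * 4 / 3) ^ (3⁻¹ : ℝ))
  have hset : ∀ s x, MeasurableSet s →
      ∫⁻ y in s, ‖V y‖ₑ / ‖x - y‖ₑ ≤ C * lorentzNorm volume (3 / 2) 1 (s.indicator V) := by
    intro s x hs
    convert lintegral_enorm_div_le_lorentzNorm (hVm.indicator hs) x using 1
    rw [← lintegral_indicator hs]
    congr 1 with y
    by_cases hy : y ∈ s <;> simp [hy]
  have hsmall : ∀ {ε : ℝ≥0∞}, 0 < ε → 0 < ε / C := fun hε =>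
    ENNReal.div_pos hε.ne' ENNReal.ofReal_ne_top
  refine ⟨?_, fun ε hε => ?_, fun ε hε => ?_⟩
  · refine lt_of_le_of_lt (iSup_le fun x => lintegral_enorm_div_le_lorentzNorm hVm x) ?_
    exact ENNReal.mul_lt_top ENNReal.ofReal_lt_top hV.lt_top
  · obtain ⟨δ, hδ, hAδ⟩ := exists_pos_lorentzNorm_indicator_le hV (hsmall hε)
    have hvol : Tendsto (fun ρ : ℝ => ENNReal.ofReal ρ ^ 3 * ENNReal.ofReal (π * 4 / 3))
        (𝓝[>] 0) (𝓝 0) := by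
      simpa [Function.comp_def] using (((ENNReal.continuous_mul_const ENNReal.ofReal_ne_top).comp
        ((ENNReal.continuous_pow 3).comp ENNReal.continuous_ofReal)).tendsto 0).mono_left
          nhdsWithin_le_nhds
    obtain ⟨ρ, hρδ, hρ⟩ := ((hvol.eventually (Iic_mem_nhds hδ)).and self_mem_nhdsWithin).exists
    refine ⟨ρ, hρ, fun x => (hset _ x measurableSet_ball).trans ?_⟩
    refine (mul_le_mul_right (hAδ _ ?_) _).trans ENNReal.mul_div_le
    simpa using hρδ
  · have hA : Antitone fun n : ℕ => (ball (0 : E3) n)ᶜ := fun m n h =>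
      compl_subset_compl.2 (ball_subset_ball (Nat.cast_le.2 h))
    have hA0 : ⋂ n : ℕ, (ball (0 : E3) n)ᶜ = ∅ := by
      simp only [← compl_iUnion, compl_empty_iff, iUnion_ball_nat]
    have hlim :=
      tendsto_lorentzNorm_indicator_atTop hVm hV (fun n => measurableSet_ball.compl) hA hA0
    obtain ⟨n, hn, hn0⟩ :=
      ((ENNReal.tendsto_nhds_zero.1 hlim _ (hsmall hε)).and (eventually_gt_atTop 0)).exists
    exact ⟨n, Nat.cast_pos.2 hn0, fun x => (hset _ x measurableSet_ball.compl).trans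
      ((mul_le_mul_right hn _).trans ENNReal.mul_div_le)⟩

theorem norm_resKer_le (η x y : E3) : ‖resKer η x y‖ ≤ ‖x - y‖⁻¹ := by
  have hexp : ‖Complex.exp (Complex.I * (‖η‖ : ℂ) * (‖x - y‖ : ℂ))‖ = 1 := by
    simp [Complex.norm_exp]
  rw [resKer, norm_div, hexp, Complex.norm_real, Real.norm_of_nonneg (by positivity), one_div,
    mul_inv]
  exact mul_le_of_le_one_left (by positivity)
    (inv_le_one_of_one_le₀ (by linarith [Real.pi_gt_three]))

theorem measurable_resKer (η x : E3) : Measurable (resKer η x) := by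
  unfold resKer
  fun_prop

theorem continuousOn_resKer (η y : E3) : ContinuousOn (fun x => resKer η x y) {y}ᶜ := by
  unfold resKer
  refine ContinuousOn.div (by fun_prop) (by fun_prop) fun x hx => ?_
  have : x - y ≠ 0 := sub_ne_zero.2 hx
  exact_mod_cast (by positivity : 4 * π * ‖x - y‖ ≠ 0)

/-- For `V ∈ L^{3/2,1}(ℝ³)` and `f ∈ L^∞`, the function
`x ↦ ∫ e^{i|η||x−y|}/(4π|x−y|) V(y) f(y) dy` is continuous and vanishes at infinity;
i.e., `R₀(|η|²+i0)V` maps `L^∞` into `C₀`. -/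
theorem resolvent_V_maps_Linfty_to_C0
    (V : E3 → ℂ) (hVmeas : Measurable V) (hV : lorentzNorm volume (3/2) 1 V < ∞)
    (f : E3 → ℂ) (hfmeas : Measurable f) (hf : eLpNorm f ∞ volume < ∞) (η : E3) :
    Continuous (fun x => ∫ y, resKer η x y * V y * f y) ∧
      Tendsto (fun x => ∫ y, resKer η x y * V y * f y)
        (Bornology.cobounded E3) (𝓝 0) := by
  have hf_le : ∀ᵐ y, ‖f y‖ₑ ≤ eLpNorm f ∞ volume := by
    simpa [eLpNorm_exponent_top] using ae_le_eLpNormEssSup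
  have hVf : GlobalKato volume fun y => V y * f y :=
    (globalKato_of_lorentzNorm_ne_top hVmeas hV.ne).mul hf.ne hf_le
  have hVfm : AEStronglyMeasurable (fun y => V y * f y) := (hVmeas.mul hfmeas).aestronglyMeasurable
  have hk := fun x y (_ : x ≠ y) => norm_resKer_le η x y
  have hkm : ∀ x, AEStronglyMeasurable (resKer η x) := fun x =>
    (measurable_resKer η x).aestronglyMeasurable
  simp only [mul_assoc]
  exact ⟨hVf.continuous_integral_mul hVfm hk hkm (continuousOn_resKer η),
    hVf.tendsto_integral_mul_cobounded hVfm hk hkm⟩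

end
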